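/- Let g : ℝ → ℝ be any map such that g(x) = x whenever x < −10 or x > 1, and g(x) = h(T₋₁⁻¹(h⁻¹(x))) for all x ∈ [−10, −9.8], where T₋₁⁻¹(x) = 100x + 99 is the inverse of T₋₁ and h⁻¹ is the inverse of h (h⁻¹(y) = 10y for y ≥ 0 and h⁻¹(y) = y/10 for y < 0). Then K₋ is contained in the image of K₋ under g: K₋ ⊆ g '' K₋. -/

import Mathlib

noncomputable section

/-- The affine contraction of ratio 1/100 fixing 0. -/
def T0 (x : ℝ) : ℝ := x / 100

/-- The affine contraction of ratio 1/100 fixing 1. -/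
def T1 (x : ℝ) : ℝ := 1 + (x - 1) / 100

/-- The affine contraction of ratio 1/100 fixing -1. -/
def Tm1 (x : ℝ) : ℝ := -1 + (x + 1) / 100

/-- The inverse of `T0`. -/
def T0inv (x : ℝ) : ℝ := 100 * x

/-- The `i`-th iterate of `T0` for `i ≥ 0`, and the `|i|`-th iterate of
`T0⁻¹ : x ↦ 100 x` for `i < 0`. -/
def T0z : ℤ → ℝ → ℝ
  | Int.ofNat n => T0^[n]
  | Int.negSucc n => T0inv^[n + 1]

/-- The set `K₊ = {0} ∪ ⋃ i ∈ ℤ, T₀^[i] '' (C₁ ∪ C₋₁)` where `C₁ = T₁ '' C`,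
`C₋₁ = T₋₁ '' C`. -/
def Kplus (C : Set ℝ) : Set ℝ := {0} ∪ ⋃ i : ℤ, T0z i '' (T1 '' C ∪ Tm1 '' C)

/-- The map `Q : x ↦ x/10`. -/
def Q (x : ℝ) : ℝ := x / 10

/-- The set `K₋ = Q '' K₊`. -/
def Kminus (C : Set ℝ) : Set ℝ := Q '' Kplus C

/-- The bijection `h` : `x ↦ x/10` for `x ≥ 0`, `x ↦ 10 x` for `x < 0`. -/
def hmap (x : ℝ) : ℝ := if 0 ≤ x then x / 10 else 10 * x

/-- The inverse of `h` : `y ↦ 10 y` for `y ≥ 0`, `y ↦ y/10` for `y < 0`. -/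
def hmapInv (y : ℝ) : ℝ := if 0 ≤ y then 10 * y else y / 10

/-- The inverse of `T₋₁` : `x ↦ 100 x + 99`. -/
def Tm1inv (x : ℝ) : ℝ := 100 * x + 99

/-!
Every point `y` of `K₋` in `[-10, 1]` is of the form `h c` with `c ∈ C`: the pieces
`T₀^[n] '' (C₁ ∪ C₋₁)` with `n ≥ 0` lie in `C`, the piece `T₀⁻¹ '' C₋₁` is sent by `Q` onto
`h '' C₋₁`, and all other pieces are pushed by `Q` outside `[-10, 1]`, where `g` is the identity.
For such `y`, the point `10 T₋₁ c = Q (T₀⁻¹ (T₋₁ c))` of `K₋` lies in `[-10, -9.8]`, and there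
`g` undoes `10 T₋₁`, giving `g (10 T₋₁ c) = h c = y`.
-/

open Set

lemma T0_iterate_apply (n : ℕ) (x : ℝ) : T0^[n] x = x / 100 ^ n := by
  induction n with
  | zero => simp
  | succ n ih =>
    rw [Function.iterate_succ_apply', ih, T0, pow_succ]
    ring

lemma T0inv_iterate_apply (n : ℕ) (x : ℝ) : T0inv^[n] x = 100 ^ n * x := by
  induction n with
  | zero => simp
  | succ n ih =>
    rw [Function.iterate_succ_apply', ih, T0inv, pow_succ]
    ring

lemma T0z_negSucc_apply (n : ℕ) (x : ℝ) : T0z (Int.negSucc n) x = 100 ^ (n + 1) * x :=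
  T0inv_iterate_apply (n + 1) x

lemma abs_Tm1_le (x : ℝ) : |Tm1 x| ≤ 99 / 100 + |x| / 100 := by
  rw [Tm1, abs_le]
  constructor <;> linarith [neg_abs_le x, le_abs_self x]

lemma abs_T0_le (x : ℝ) : |T0 x| ≤ 99 / 100 + |x| / 100 := by
  rw [T0, abs_div, abs_of_pos (by norm_num : (0 : ℝ) < 100)]
  linarith

lemma abs_T1_le (x : ℝ) : |T1 x| ≤ 99 / 100 + |x| / 100 := by
  rw [T1, abs_le]
  constructor <;> linarith [neg_abs_le x, le_abs_self x]

/-- At a point of maximal modulus `M` of `C` the self-similarity gives `M ≤ 99/100 + M/100`. -/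
lemma abs_le_one_of_subset_union_image {C : Set ℝ} (hC : IsCompact C)
    (hsub : C ⊆ Tm1 '' C ∪ T0 '' C ∪ T1 '' C) {x : ℝ} (hx : x ∈ C) : |x| ≤ 1 := by
  obtain ⟨c₀, hc₀, hmax⟩ := hC.exists_isMaxOn ⟨x, hx⟩ continuous_abs.continuousOn
  suffices h : |c₀| ≤ 1 from (hmax hx).trans h
  have of_le : ∀ c ∈ C, |c₀| ≤ 99 / 100 + |c| / 100 → |c₀| ≤ 1 := fun c hc h => by
    have : |c| ≤ |c₀| := hmax hc
    linarith
  rcases hsub hc₀ with (⟨c, hc, rfl⟩ | ⟨c, hc, rfl⟩) | ⟨c, hc, rfl⟩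
  · exact of_le c hc (abs_Tm1_le c)
  · exact of_le c hc (abs_T0_le c)
  · exact of_le c hc (abs_T1_le c)

lemma zero_mem_of_mapsTo_T0 {C : Set ℝ} (hC : IsClosed C) (hne : C.Nonempty)
    (hT0 : MapsTo T0 C C) : (0 : ℝ) ∈ C := by
  obtain ⟨c, hc⟩ := hne
  have hmem : ∀ n : ℕ, c / 100 ^ n ∈ C := fun n => T0_iterate_apply n c ▸ hT0.iterate n hc
  have hlim : Filter.Tendsto (fun n : ℕ => c / 100 ^ n) Filter.atTop (nhds 0) :=
    tendsto_const_nhds.div_atTop (tendsto_pow_atTop_atTop_of_one_lt (by norm_num))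
  exact hC.mem_of_tendsto hlim (Filter.Eventually.of_forall hmem)

lemma Q_mem_image_hmap {C : Set ℝ} (hT0 : MapsTo T0 C C) {x : ℝ} (hx : x ∈ C) :
    Q x ∈ hmap '' C := by
  rcases le_or_gt 0 x with hpos | hneg
  · exact ⟨x, hx, by rw [hmap, if_pos hpos, Q]⟩
  · refine ⟨T0 x, hT0 hx, ?_⟩
    rw [hmap, if_neg (by rw [T0]; linarith), T0, Q]
    ring

lemma Q_mem_image_hmap_or_of_mem_Kplus {C : Set ℝ} (hne : C.Nonempty) (hcomp : IsCompact C)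
    (hself : C = Tm1 '' C ∪ T0 '' C ∪ T1 '' C) {k : ℝ} (hk : k ∈ Kplus C) :
    (Q k < -10 ∨ 1 < Q k) ∨ Q k ∈ hmap '' C := by
  have hTm1 : MapsTo Tm1 C C := fun x hx => hself ▸ Or.inl (Or.inl ⟨x, hx, rfl⟩)
  have hT0 : MapsTo T0 C C := fun x hx => hself ▸ Or.inl (Or.inr ⟨x, hx, rfl⟩)
  have hT1 : MapsTo T1 C C := fun x hx => hself ▸ Or.inr ⟨x, hx, rfl⟩
  have habs : ∀ {x}, x ∈ C → |x| ≤ 1 := abs_le_one_of_subset_union_image hcomp hself.le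
  rcases hk with h0 | hk
  · rw [mem_singleton_iff.mp h0]
    exact Or.inr ⟨0, zero_mem_of_mapsTo_T0 hcomp.isClosed hne hT0, by simp [hmap, Q]⟩
  obtain ⟨i, w, hw, rfl⟩ := mem_iUnion.mp hk
  have hwC : w ∈ C := by
    rcases hw with ⟨c, hc, rfl⟩ | ⟨c, hc, rfl⟩
    exacts [hT1 hc, hTm1 hc]
  rcases i with n | n
  · exact Or.inr (Q_mem_image_hmap hT0 (hT0.iterate n hwC))
  have h100 : (1 : ℝ) ≤ 100 ^ n := one_le_pow₀ (by norm_num)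
  rw [T0z_negSucc_apply, Q]
  rcases hw with ⟨c, hc, rfl⟩ | ⟨c, hc, rfl⟩
  · have : 98 / 100 ≤ T1 c := by rw [T1]; linarith [(abs_le.mp (habs hc)).1]
    left; right
    rw [pow_succ]
    nlinarith
  · have : Tm1 c ≤ -98 / 100 := by rw [Tm1]; linarith [(abs_le.mp (habs hc)).2]
    rcases n with _ | m
    · refine Or.inr ⟨Tm1 c, hTm1 hc, ?_⟩
      rw [hmap, if_neg (by linarith)]
      ring
    · left; left
      have h100' : (1 : ℝ) ≤ 100 ^ m := one_le_pow₀ (by norm_num)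
      rw [pow_succ, pow_succ]
      nlinarith

lemma ten_mul_Tm1_mem_Kminus {C : Set ℝ} {c : ℝ} (hc : c ∈ C) : 10 * Tm1 c ∈ Kminus C := by
  refine ⟨100 * Tm1 c, Or.inr (mem_iUnion.mpr ⟨-1, Tm1 c, Or.inr ⟨c, hc, rfl⟩, ?_⟩), ?_⟩
  · simpa using T0z_negSucc_apply 0 (Tm1 c)
  · rw [Q]
    ring

lemma ten_mul_Tm1_mem_Icc {c : ℝ} (hc : |c| ≤ 1) :
    10 * Tm1 c ∈ Icc (-10 : ℝ) (-9.8 : ℝ) := by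
  obtain ⟨hc₁, hc₂⟩ := abs_le.mp hc
  constructor <;> · rw [Tm1]; norm_num; linarith

lemma Tm1inv_Tm1 (x : ℝ) : Tm1inv (Tm1 x) = x := by
  rw [Tm1inv, Tm1]
  ring

lemma hmapInv_ten_mul_of_neg {y : ℝ} (hy : y < 0) : hmapInv (10 * y) = y := by
  rw [hmapInv, if_neg (by linarith)]
  ring

lemma Tm1_neg {c : ℝ} (hc : |c| ≤ 1) : Tm1 c < 0 := by
  rw [Tm1]
  linarith [(abs_le.mp hc).2]

theorem stmt_13 (C : Set ℝ) (hne : C.Nonempty) (hcomp : IsCompact C)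
    (hself : C = Tm1 '' C ∪ T0 '' C ∪ T1 '' C)
    (g : ℝ → ℝ)
    (hg_id : ∀ x : ℝ, x < -10 ∨ 1 < x → g x = x)
    (hg_left : ∀ x ∈ Set.Icc (-10 : ℝ) (-9.8 : ℝ), g x = hmap (Tm1inv (hmapInv x))) :
    Kminus C ⊆ g '' Kminus C := by
  rintro _ ⟨k, hk, rfl⟩
  rcases Q_mem_image_hmap_or_of_mem_Kplus hne hcomp hself hk with hout | ⟨c, hc, hck⟩
  · exact ⟨Q k, ⟨k, hk, rfl⟩, hg_id _ hout⟩
  · have habs : |c| ≤ 1 := abs_le_one_of_subset_union_image hcomp hself.le hc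
    refine ⟨10 * Tm1 c, ten_mul_Tm1_mem_Kminus hc, ?_⟩
    rw [hg_left _ (ten_mul_Tm1_mem_Icc habs), hmapInv_ten_mul_of_neg (Tm1_neg habs), Tm1inv_Tm1,
      hck]
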